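/- Let T be a decision-tree shape over a training data set (E, λ) whose root r is a cut with feature f, with a feature assigned to every cut, a class label assigned to every leaf, an error bound t_w ∈ ℕ for every leaf w, a designated set N of cuts with r ∈ N, and thresholds assigned to all cuts outside N. Suppose there is an assignment of thresholds to the cuts in N giving r the threshold x* such that, in the resulting decision tree, for every leaf w at most t_w of the examples of E assigned to w have a label different from the label of w. Let z ≥ x* be a real number such that the cuts of N lying in the left subtree of r can be assigned thresholds so that, viewing the left subtree as a decision tree on the family {e ∈ E : e[f] ≤ z}, every leaf w of the left subtree has at most t_w errors. Then there is an assignment of thresholds to the cuts in N giving r the threshold z such that, in the resulting decision tree, every leaf w of T has at most t_w errors among the examples of E assigned to it. -/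

import Mathlib

/-- Decision trees with features of type `α`: each leaf carries a class label
(`true` = blue, `false` = red), each internal node (a *cut*) carries a feature
and a real threshold. -/
inductive DTree (α : Type) : Type
  | leaf (label : Bool) : DTree α
  | node (feat : α) (thr : ℝ) (left right : DTree α) : DTree α

/-- A decision-tree *shape*: every cut carries a feature and optionally a threshold
(`none` means that the cut belongs to the designated set `N` of cuts with unknown
threshold), and every leaf carries a class label together with an error bound. -/
inductive Shape (α : Type) : Type
  | leaf (label : Bool) (bound : ℕ) : Shape α
  | node (feat : α) (thr : Option ℝ) (left right : Shape α) : Shape α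

/-- `Completes S T`: the decision tree `T` realizes the shape `S`, i.e. it has the
same underlying tree, the same features at cuts, the same labels at leaves, and it
agrees with every threshold that is already fixed in `S` (the thresholds of the cuts
in `N`, marked `none`, are arbitrary). -/
def Completes {α : Type} : Shape α → DTree α → Prop
  | Shape.leaf c _, DTree.leaf c' => c' = c
  | Shape.node f xo l r, DTree.node f' x' l' r' =>
      f' = f ∧ (∀ x : ℝ, xo = some x → x' = x) ∧ Completes l l' ∧ Completes r r'
  | _, _ => False

/-- `LeafOK E lab S T F`: on the subfamily `F` of the examples, the decision tree `T`
(of shape `S`) commits, at every leaf `w`, at most `t_w` errors, where `t_w` is the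
error bound that `S` attaches to `w`. -/
noncomputable def LeafOK {α ι : Type} (E : ι → α → ℝ) (lab : ι → Bool) :
    Shape α → DTree α → Finset ι → Prop
  | Shape.leaf _ b, DTree.leaf c, S => (S.filter (fun i => lab i ≠ c)).card ≤ b
  | Shape.node _ _ sl sr, DTree.node f x l r, S =>
      LeafOK E lab sl l (S.filter (fun i => E i f ≤ x))
        ∧ LeafOK E lab sr r (S.filter (fun i => ¬ E i f ≤ x))
  | _, _, _ => False

/-!
Keep the right subtree `tr` of the given completion and use `tl'` on the left. Raising the
root threshold from `x*` to `z` only shrinks the family of examples sent to the right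
subtree, and the per-leaf error counts of a fixed tree can only drop when its example
family shrinks.
-/

theorem LeafOK.of_subset {α ι : Type} {E : ι → α → ℝ} {lab : ι → Bool} {S : Shape α}
    {T : DTree α} {A B : Finset ι} (hAB : A ⊆ B) (h : LeafOK E lab S T B) :
    LeafOK E lab S T A := by
  induction S generalizing T A B with
  | leaf _ _ =>
    cases T with
    | leaf _ => exact (Finset.card_le_card (Finset.filter_subset_filter _ hAB)).trans h
    | node _ _ _ _ => exact h.elim
  | node _ _ _ _ ihl ihr =>
    cases T with
    | leaf _ => exact h.elim
    | node _ _ _ _ =>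
      exact ⟨ihl (Finset.filter_subset_filter _ hAB) h.1,
        ihr (Finset.filter_subset_filter _ hAB) h.2⟩

/-- Let the root be a cut with feature `f` belonging to `N`
(threshold `none`), with left sub-shape `sl` and right sub-shape `sr`. Suppose that
some completion `node f x* tl tr` satisfies all per-leaf error bounds on the full
example family. Let `z ≥ x*` be such that the cuts of `N` in the left subtree can be
given thresholds (a completion `tl'` of `sl`) so that, viewing the left subtree as a
decision tree on `{e ∈ E : e f ≤ z}`, every leaf of the left subtree meets its error
bound. Then there is a completion of the whole shape whose root threshold is `z`
satisfying all per-leaf error bounds on the full example family. -/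
theorem stmt6 {α ι : Type} [Fintype ι] (E : ι → α → ℝ) (lab : ι → Bool)
    (f : α) (sl sr : Shape α) (xstar : ℝ) (tl tr : DTree α)
    (h1 : Completes (Shape.node f none sl sr) (DTree.node f xstar tl tr))
    (h2 : LeafOK E lab (Shape.node f none sl sr) (DTree.node f xstar tl tr)
      Finset.univ)
    (z : ℝ) (hz : xstar ≤ z) (tl' : DTree α) (h3 : Completes sl tl')
    (h4 : LeafOK E lab sl tl' (Finset.univ.filter (fun i => E i f ≤ z))) :
    ∃ tl'' tr'' : DTree α,
      Completes (Shape.node f none sl sr) (DTree.node f z tl'' tr'') ∧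
      LeafOK E lab (Shape.node f none sl sr) (DTree.node f z tl'' tr'')
        Finset.univ := by
  obtain ⟨-, -, -, hr⟩ := h1
  have right_shrinks : Finset.univ.filter (fun i => ¬ E i f ≤ z) ⊆
      Finset.univ.filter (fun i => ¬ E i f ≤ xstar) :=
    Finset.monotone_filter_right _ fun _ _ hz' hx => hz' (hx.trans hz)
  exact ⟨tl', tr, ⟨rfl, fun _ h => (Option.some_ne_none _ h.symm).elim, h3, hr⟩, h4,
    h2.2.of_subset right_shrinks⟩
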